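/- Let e ≤ α be epsilon numbers. Then the map q ↦ q[e := α] is an order-isomorphism from the interval [e, e⁺) onto [α, α⁺) ∩ M(e, α) that additionally commutes with ordinal addition, multiplication, and x ↦ ω^x, with inverse q ↦ q[α := e] (restricted appropriately). -/

import Mathlib

/-!
In Cantor normal form `y = ω ^ a * c + t` (with `0 < c < ω`, `t < ω ^ a`) the substitution
`f := subst e α` acts termwise: `f y = ω ^ f a * c + f t`. One structural induction shows that
`f` is strictly increasing on `[0, e⁺)`; consequently `t < ω ^ a` gives `f t < ω ^ f a`, so the
right-hand side is again in Cantor normal form. Thus `f` transports leading exponents and the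
sets `Ep`, and `subst α e` undoes it term by term. Additivity follows by comparing leading
exponents, and multiplicativity from `q * ω ^ b = ω ^ (log ω q + b)` for `q, b ≠ 0`.
-/

open Ordinal

def IsEps (x : Ordinal.{0}) : Prop := omega0 ^ x = x

noncomputable def nextEps (x : Ordinal.{0}) : Ordinal.{0} := sInf {e | IsEps e ∧ x < e}

inductive InEp : Ordinal.{0} → Ordinal.{0} → Prop
  | self (x : Ordinal.{0}) (h : omega0 ^ x = x) : InEp x x
  | exp (x e c y : Ordinal.{0}) (h : omega0 ^ x ≠ x) (hm : (e, c) ∈ CNF omega0 x)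
      (hy : InEp y e) : InEp y x

/-- The set of epsilon numbers appearing in the iterated Cantor normal form of `x`. -/
def Ep (x : Ordinal.{0}) : Set Ordinal.{0} := {y | InEp y x}

/-- Substitution of the epsilon number `α` by the epsilon number `e` in the
iterated Cantor normal form of `x`. -/
noncomputable def subst (α e : Ordinal.{0}) (x : Ordinal.{0}) : Ordinal.{0} :=
  if h : omega0 ^ x = x then (if x = α then e else x)
  else ((CNF omega0 x).attach.map (fun p => omega0 ^ (subst α e p.1.1) * p.1.2)).sum
termination_by x
decreasing_by
  have hx0 : x ≠ 0 := by
    rintro rfl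
    have := p.2
    simp [Ordinal.CNF.zero_right] at this
  have hle := Ordinal.CNF.fst_le_log p.2
  have hlt : Ordinal.log omega0 x < x := by
    have h1 : x < omega0 ^ x :=
      lt_of_le_of_ne (Ordinal.right_le_opow x one_lt_omega0) (Ne.symm h)
    exact (Ordinal.lt_opow_iff_log_lt one_lt_omega0 hx0).mp h1
  exact lt_of_le_of_lt hle hlt

def MSet (α e : Ordinal.{0}) : Set Ordinal.{0} :=
  {q | q < nextEps α ∧ Ep q ∩ Set.Iio α ⊆ Set.Iio e}

open Order Set

namespace Ordinal

variable {a b c d q s t x : Ordinal}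

theorem le_opow_mul_add (hc : c ≠ 0) : ω ^ a ≤ ω ^ a * c + t :=
  (le_mul_left _ (pos_iff_ne_zero.2 hc)).trans le_self_add

theorem self_le_opow_mul_add (hc : c ≠ 0) : a ≤ ω ^ a * c + t :=
  (right_le_opow a one_lt_omega0).trans (le_opow_mul_add hc)

theorem lt_opow_mul_add_of_lt (hc : c ≠ 0) (ht : t < ω ^ a) : t < ω ^ a * c + t :=
  ht.trans_le (le_opow_mul_add hc)

theorem exists_eq_opow_mul_add (hx : x ≠ 0) :
    ∃ a c t : Ordinal, c ≠ 0 ∧ c < ω ∧ t < ω ^ a ∧ x = ω ^ a * c + t :=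
  ⟨log ω x, x / ω ^ log ω x, x % ω ^ log ω x,
    ((div_pos (opow_ne_zero _ omega0_ne_zero)).2 (opow_log_le_self _ hx)).ne',
    div_opow_log_lt x one_lt_omega0, mod_lt x (opow_ne_zero _ omega0_ne_zero),
    (div_add_mod x _).symm⟩

theorem opow_mul_add_induction {P : Ordinal → Prop} (zero : P 0)
    (step : ∀ a c t : Ordinal, c ≠ 0 → c < ω → t < ω ^ a → P t → P (ω ^ a * c + t))
    (x : Ordinal) : P x := by
  induction x using WellFoundedLT.induction with
  | ind x IH =>
    rcases eq_or_ne x 0 with rfl | hx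
    · exact zero
    obtain ⟨a, c, t, hc0, hc, ht, rfl⟩ := exists_eq_opow_mul_add hx
    exact step a c t hc0 hc ht (IH t (lt_opow_mul_add_of_lt hc0 ht))

theorem opow_mul_add_add_opow_mul_add (ht : t < ω ^ a) (hd : d ≠ 0) :
    ω ^ a * c + t + (ω ^ a * d + s) = ω ^ a * (c + d) + s := by
  rw [add_assoc, ← add_assoc t, add_of_omega0_opow_le ht (le_mul_left _ (pos_iff_ne_zero.2 hd)),
    ← add_assoc, ← mul_add]

theorem mul_omega0_opow (hq : q ≠ 0) (hb : b ≠ 0) : q * ω ^ b = ω ^ (log ω q + b) := by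
  have hb' : 1 + (b - 1) = b := Ordinal.add_sub_cancel_of_le (one_le_iff_ne_zero.2 hb)
  rw [← hb', opow_add, opow_one, ← mul_assoc,
    mul_eq_opow_log_succ hq isPrincipal_mul_omega0 (natCast_lt_omega0 2), ← opow_add,
    ← add_assoc, succ_eq_add_one]

end Ordinal

namespace IsEps

variable {E a c t : Ordinal.{0}}

theorem ne_zero (hE : IsEps E) : E ≠ 0 := by
  rintro rfl
  simp [IsEps] at hE

theorem omega0_le (hE : IsEps E) : ω ≤ E := by
  rw [← hE]
  simpa using opow_le_opow_right omega0_pos (one_le_iff_ne_zero.2 hE.ne_zero)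

theorem isPrincipal_add (hE : IsEps E) : IsPrincipal (· + ·) E :=
  hE ▸ isPrincipal_add_omega0_opow E

theorem isPrincipal_mul (hE : IsEps E) : IsPrincipal (· * ·) E := by
  have h := isPrincipal_mul_omega0_opow_opow E
  rwa [hE, hE] at h

theorem opow_lt (hE : IsEps E) (ha : a < E) : ω ^ a < E :=
  hE ▸ (opow_lt_opow_iff_right one_lt_omega0).2 ha

theorem opow_mul_add_lt (hE : IsEps E) (ha : a < E) (hc : c < ω) (ht : t < E) :
    ω ^ a * c + t < E :=
  hE.isPrincipal_add (hE.isPrincipal_mul (hE.opow_lt ha) (hc.trans_le hE.omega0_le)) ht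

theorem CNF_eq (hE : IsEps E) : CNF ω E = [(E, 1)] := by
  have h := CNF.opow_mul_add one_lt_omega0 one_ne_zero one_lt_omega0 (opow_pos E omega0_pos)
  rwa [mul_one, add_zero, CNF.zero_right, hE] at h

end IsEps

theorem nextEps_mem (x : Ordinal.{0}) : nextEps x ∈ {e | IsEps e ∧ x < e} := by
  have hne : {e | IsEps e ∧ x < e}.Nonempty :=
    ⟨nfp (ω ^ ·) (succ x), nfp_fp (isNormal_opow one_lt_omega0) _,
      (lt_succ x).trans_le (le_nfp _ _)⟩
  exact csInf_mem hne

theorem isEps_nextEps (x : Ordinal.{0}) : IsEps (nextEps x) := (nextEps_mem x).1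

theorem lt_nextEps (x : Ordinal.{0}) : x < nextEps x := (nextEps_mem x).2

theorem nextEps_pos (x : Ordinal.{0}) : 0 < nextEps x :=
  pos_iff_ne_zero.2 (isEps_nextEps x).ne_zero

theorem IsEps.le_of_lt_nextEps {e x : Ordinal.{0}} (he : IsEps e) (h : e < nextEps x) : e ≤ x :=
  le_of_not_gt fun hx =>
    (csInf_le (OrderBot.bddBelow {e | IsEps e ∧ x < e}) ⟨he, hx⟩).not_gt h

theorem opow_mul_add_eps_induction {P : Ordinal.{0} → Prop} (zero : P 0)
    (eps : ∀ x, IsEps x → P x)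
    (step : ∀ a c t : Ordinal, c ≠ 0 → c < ω → t < ω ^ a → a < ω ^ a * c + t →
      P a → P t → P (ω ^ a * c + t))
    (x : Ordinal) : P x := by
  induction x using WellFoundedLT.induction with
  | ind x IH =>
    rcases eq_or_ne x 0 with rfl | hx
    · exact zero
    by_cases hxe : IsEps x
    · exact eps x hxe
    obtain ⟨a, c, t, hc0, hc, ht, rfl⟩ := exists_eq_opow_mul_add hx
    have hax : a < ω ^ a * c + t := by
      have hle := le_opow_mul_add (a := a) (t := t) hc0
      refine (self_le_opow_mul_add hc0).lt_of_ne fun h => hxe ?_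
      rw [← h] at hle ⊢
      exact le_antisymm hle (right_le_opow _ one_lt_omega0)
    exact step a c t hc0 hc ht hax (IH a hax) (IH t (lt_opow_mul_add_of_lt hc0 ht))

section Ep

variable {E a c t : Ordinal.{0}}

theorem Ep_eq_biUnion_CNF (x : Ordinal.{0}) : Ep x = ⋃ p ∈ CNF ω x, Ep p.1 := by
  by_cases hx : IsEps x
  · simp [hx.CNF_eq]
  ext z
  simp only [Ep, mem_ofPred_eq, mem_iUnion, exists_prop]
  constructor
  · rintro (⟨_, h⟩ | ⟨_, a, c, _, _, hm, hz⟩)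
    · exact absurd h hx
    · exact ⟨(a, c), hm, hz⟩
  · rintro ⟨⟨a, c⟩, hm, hz⟩
    exact InEp.exp x a c z hx hm hz

theorem Ep_zero : Ep 0 = ∅ := by
  rw [Ep_eq_biUnion_CNF, CNF.zero_right]
  simp

theorem IsEps.Ep_eq (hE : IsEps E) : Ep E = {E} := by
  ext z
  constructor
  · rintro (_ | ⟨_, _, _, _, h⟩)
    · rfl
    · exact absurd hE h
  · rintro rfl
    exact InEp.self _ hE

theorem Ep_opow_mul_add (hc0 : c ≠ 0) (hc : c < ω) (ht : t < ω ^ a) :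
    Ep (ω ^ a * c + t) = Ep a ∪ Ep t := by
  rw [Ep_eq_biUnion_CNF, CNF.opow_mul_add one_lt_omega0 hc0 hc ht, Ep_eq_biUnion_CNF t]
  simp

end Ep

section subst

variable {β γ a c t x : Ordinal.{0}}

theorem subst_of_isEps (hx : IsEps x) : subst β γ x = if x = β then γ else x := by
  rw [subst, dif_pos (show ω ^ x = x from hx)]

theorem isEps_subst (hγ : IsEps γ) (hx : IsEps x) : IsEps (subst β γ x) := by
  rw [subst_of_isEps hx]
  split_ifs <;> assumption

theorem subst_eq_sum_CNF (hγ : IsEps γ) (x : Ordinal.{0}) :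
    subst β γ x = ((CNF ω x).map fun p => ω ^ subst β γ p.1 * p.2).sum := by
  by_cases hx : IsEps x
  · simpa [hx.CNF_eq] using (isEps_subst hγ hx).symm
  · rw [subst, dif_neg (show ¬ω ^ x = x from hx)]
    exact congrArg List.sum
      (List.attach_map_val (f := fun p : Ordinal × Ordinal => ω ^ subst β γ p.1 * p.2))

@[simp]
theorem subst_zero : subst β γ 0 = 0 := by
  rw [subst, dif_neg (by simp), CNF.zero_right]
  rfl

theorem subst_opow_mul_add (hγ : IsEps γ) (hc : c < ω) (ht : t < ω ^ a) :
    subst β γ (ω ^ a * c + t) = ω ^ subst β γ a * c + subst β γ t := by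
  rcases eq_or_ne c 0 with rfl | hc0
  · simp
  rw [subst_eq_sum_CNF hγ, CNF.opow_mul_add one_lt_omega0 hc0 hc ht, List.map_cons,
    List.sum_cons, ← subst_eq_sum_CNF hγ]

theorem subst_opow (hγ : IsEps γ) (a : Ordinal.{0}) :
    subst β γ (ω ^ a) = ω ^ subst β γ a := by
  simpa using
    subst_opow_mul_add (β := β) (c := 1) (t := 0) hγ one_lt_omega0 (opow_pos a omega0_pos)

theorem subst_of_lt (hγ : IsEps γ) (hx : x < β) : subst β γ x = x := by
  induction x using opow_mul_add_eps_induction with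
  | zero => exact subst_zero
  | eps x hx' => rw [subst_of_isEps hx', if_neg hx.ne]
  | step a c t hc0 hc ht hax iha iht =>
    rw [subst_opow_mul_add hγ hc ht, iha (hax.trans hx),
      iht ((lt_opow_mul_add_of_lt hc0 ht).trans hx)]

end subst

section SubstEps

variable {e α b q r y : Ordinal.{0}}

theorem subst_lt_opow_subst_of_forall_lt (hα : IsEps α)
    (hy : ∀ l < y, subst e α l < subst e α y) (hr : r < ω ^ y) :
    subst e α r < ω ^ subst e α y := by
  induction r using opow_mul_add_induction with
  | zero => simpa using opow_pos _ omega0_pos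
  | step l c s hc0 hc hs ih =>
    have hly : l < y :=
      (opow_lt_opow_iff_right one_lt_omega0).1 ((le_opow_mul_add hc0).trans_lt hr)
    rw [subst_opow_mul_add hα hc hs]
    exact isPrincipal_add_omega0_opow _ (opow_mul_lt_opow hc (hy l hly))
      (ih ((lt_opow_mul_add_of_lt hc0 hs).trans hr))

theorem subst_strictMonoOn (hα : IsEps α) (hle : e ≤ α) :
    StrictMonoOn (subst e α) (Iio (nextEps e)) := by
  suffices h : ∀ y < nextEps e, ∀ x < y, subst e α x < subst e α y from
    fun x _ y hy hxy => h y hy x hxy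
  intro y
  induction y using opow_mul_add_eps_induction with
  | zero => exact fun _ x hx => absurd hx not_lt_zero
  | eps y hy =>
    intro hye x hxy
    rw [subst_of_lt hα (hxy.trans_le (hy.le_of_lt_nextEps hye)), subst_of_isEps hy]
    split_ifs with h
    · exact hxy.trans_le (h ▸ hle)
    · exact hxy
  | step a c t hc0 hc ht hay iha iht =>
    intro hy x hx
    rw [subst_opow_mul_add hα hc ht]
    rcases lt_or_ge x (ω ^ a * c) with hxc | hxc
    · have hd : x / ω ^ a < c := (lt_mul_iff_div_lt (opow_ne_zero _ omega0_ne_zero)).1 hxc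
      have hs := mod_lt x (opow_ne_zero a omega0_ne_zero)
      rw [← div_add_mod x (ω ^ a), subst_opow_mul_add hα (hd.trans hc) hs]
      exact (opow_mul_add_lt_opow_mul
        (subst_lt_opow_subst_of_forall_lt hα (iha (hay.trans hy)) hs) hd).trans_le le_self_add
    · obtain ⟨s, rfl⟩ := exists_add_of_le hxc
      have hst : s < t := (add_lt_add_iff_left _).1 hx
      rw [subst_opow_mul_add hα hc (hst.trans ht)]
      exact add_lt_add_right (iht ((lt_opow_mul_add_of_lt hc0 ht).trans hy) s hst) _

theorem subst_lt_opow_subst (hα : IsEps α) (hle : e ≤ α) (hy : y < nextEps e)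
    (hr : r < ω ^ y) : subst e α r < ω ^ subst e α y :=
  subst_lt_opow_subst_of_forall_lt hα
    (fun _ hl => subst_strictMonoOn hα hle (hl.trans hy) hy hl) hr

theorem subst_lt_nextEps (hα : IsEps α) (hle : e ≤ α) (hy : y < nextEps e) :
    subst e α y < nextEps α := by
  induction y using opow_mul_add_eps_induction with
  | zero => simpa using nextEps_pos α
  | eps y hy' =>
    rw [subst_of_isEps hy']
    split_ifs
    · exact lt_nextEps α
    · exact ((hy'.le_of_lt_nextEps hy).trans hle).trans_lt (lt_nextEps α)
  | step a c t hc0 hc ht hay iha iht =>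
    rw [subst_opow_mul_add hα hc ht]
    exact (isEps_nextEps α).opow_mul_add_lt (iha (hay.trans hy)) hc
      (iht ((lt_opow_mul_add_of_lt hc0 ht).trans hy))

theorem le_subst (he : IsEps e) (hα : IsEps α) (hle : e ≤ α) (hey : e ≤ y)
    (hy : y < nextEps e) : α ≤ subst e α y :=
  calc α = subst e α e := by rw [subst_of_isEps he, if_pos rfl]
    _ ≤ subst e α y := (subst_strictMonoOn hα hle).monotoneOn (lt_nextEps e) hy hey

theorem Ep_subst_inter_Iio_subset (hα : IsEps α) (hle : e ≤ α) (hy : y < nextEps e) :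
    Ep (subst e α y) ∩ Iio α ⊆ Iio e := by
  induction y using opow_mul_add_eps_induction with
  | zero => simp [Ep_zero]
  | eps y hy' =>
    rw [subst_of_isEps hy']
    split_ifs with hye
    · simp [hα.Ep_eq]
    · rw [hy'.Ep_eq]
      rintro z ⟨rfl, -⟩
      exact (hy'.le_of_lt_nextEps hy).lt_of_ne hye
  | step a c t hc0 hc ht hay iha iht =>
    have ha := hay.trans hy
    rw [subst_opow_mul_add hα hc ht, Ep_opow_mul_add hc0 hc (subst_lt_opow_subst hα hle ha ht),
      union_inter_distrib_right]
    exact union_subset (iha ha) (iht ((lt_opow_mul_add_of_lt hc0 ht).trans hy))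

theorem subst_subst (he : IsEps e) (hα : IsEps α) (hle : e ≤ α) (hy : y < nextEps e) :
    subst α e (subst e α y) = y := by
  induction y using opow_mul_add_eps_induction with
  | zero => simp
  | eps y hy' =>
    rcases (hy'.le_of_lt_nextEps hy).lt_or_eq with hye | rfl
    · rw [subst_of_lt hα hye, subst_of_lt he (hye.trans_le hle)]
    · rw [subst_of_isEps hy', if_pos rfl, subst_of_isEps hα, if_pos rfl]
  | step a c t hc0 hc ht hay iha iht =>
    have ha := hay.trans hy
    rw [subst_opow_mul_add hα hc ht, subst_opow_mul_add he hc (subst_lt_opow_subst hα hle ha ht),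
      iha ha, iht ((lt_opow_mul_add_of_lt hc0 ht).trans hy)]

theorem exists_subst_eq (he : IsEps e) (hα : IsEps α) (hle : e ≤ α) (hr : r < nextEps α)
    (hEp : Ep r ∩ Iio α ⊆ Iio e) : ∃ y < nextEps e, subst e α y = r := by
  induction r using opow_mul_add_eps_induction with
  | zero => exact ⟨0, nextEps_pos e, subst_zero⟩
  | eps r hr' =>
    rcases (hr'.le_of_lt_nextEps hr).lt_or_eq with hrα | rfl
    · have hre : r < e := hEp ⟨hr'.Ep_eq ▸ rfl, hrα⟩
      exact ⟨r, hre.trans (lt_nextEps e), subst_of_lt hα hre⟩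
    · exact ⟨e, lt_nextEps e, by rw [subst_of_isEps he, if_pos rfl]⟩
  | step a c t hc0 hc ht har iha iht =>
    rw [Ep_opow_mul_add hc0 hc ht, union_inter_distrib_right, union_subset_iff] at hEp
    obtain ⟨a', ha', rfl⟩ := iha (har.trans hr) hEp.1
    obtain ⟨t', ht', rfl⟩ := iht ((lt_opow_mul_add_of_lt hc0 ht).trans hr) hEp.2
    have ht'a' : t' < ω ^ a' := by
      by_contra! h
      have h' := (subst_strictMonoOn hα hle).monotoneOn ((isEps_nextEps e).opow_lt ha') ht' h
      rw [subst_opow hα] at h'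
      exact h'.not_gt ht
    exact ⟨ω ^ a' * c + t', (isEps_nextEps e).opow_mul_add_lt ha' hc ht',
      subst_opow_mul_add hα hc ht'a'⟩

theorem subst_add (hα : IsEps α) (hle : e ≤ α) (hq : q < nextEps e) (hr : r < nextEps e) :
    subst e α (q + r) = subst e α q + subst e α r := by
  induction q using opow_mul_add_induction with
  | zero => simp
  | step a c t hc0 hc ht ih =>
    rcases eq_or_ne r 0 with rfl | hr0
    · simp
    obtain ⟨b, d, s, hd0, hd, hs, rfl⟩ := exists_eq_opow_mul_add hr0
    have ha : a < nextEps e := (self_le_opow_mul_add hc0).trans_lt hq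
    have hb : b < nextEps e := (self_le_opow_mul_add hd0).trans_lt hr
    rcases lt_trichotomy a b with hab | rfl | hba
    · have hqb : ω ^ a * c + t < ω ^ b := opow_mul_add_lt_opow hc ht hab
      rw [add_of_omega0_opow_le hqb (le_opow_mul_add hd0), subst_opow_mul_add hα hd hs,
        add_of_omega0_opow_le (subst_lt_opow_subst hα hle hb hqb) (le_opow_mul_add hd0)]
    · rw [opow_mul_add_add_opow_mul_add ht hd0, subst_opow_mul_add hα hc ht,
        subst_opow_mul_add hα hd hs,
        opow_mul_add_add_opow_mul_add (subst_lt_opow_subst hα hle ha ht) hd0,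
        subst_opow_mul_add hα (isPrincipal_add_omega0 hc hd) hs]
    · have hra : ω ^ b * d + s < ω ^ a := opow_mul_add_lt_opow hd hs hba
      rw [add_assoc, subst_opow_mul_add hα hc (isPrincipal_add_omega0_opow a ht hra),
        ih ((lt_opow_mul_add_of_lt hc0 ht).trans hq), subst_opow_mul_add hα hc ht, add_assoc]

theorem subst_mul_natCast (hα : IsEps α) (hle : e ≤ α) (hq : q < nextEps e) (n : ℕ) :
    subst e α (q * n) = subst e α q * n := by
  induction n with
  | zero => simp
  | succ n ih =>
    rw [Nat.cast_succ, mul_add_one, mul_add_one,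
      subst_add hα hle ((isEps_nextEps e).isPrincipal_add.mul_natCast_lt hq n) hq, ih]

theorem log_subst (hα : IsEps α) (hle : e ≤ α) (hq0 : q ≠ 0) (hq : q < nextEps e) :
    log ω (subst e α q) = subst e α (log ω q) := by
  obtain ⟨a, c, t, hc0, hc, ht, rfl⟩ := exists_eq_opow_mul_add hq0
  have ha : a < nextEps e := (self_le_opow_mul_add hc0).trans_lt hq
  rw [subst_opow_mul_add hα hc ht,
    log_opow_mul_add one_lt_omega0 hc0 (subst_lt_opow_subst hα hle ha ht),
    log_opow_mul_add one_lt_omega0 hc0 ht, log_eq_zero hc, add_zero, add_zero]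

theorem subst_ne_zero (hα : IsEps α) (hle : e ≤ α) (hq0 : q ≠ 0) (hq : q < nextEps e) :
    subst e α q ≠ 0 := by
  have h := subst_strictMonoOn hα hle (nextEps_pos e) hq (pos_iff_ne_zero.2 hq0)
  rw [subst_zero] at h
  exact h.ne'

theorem subst_mul_opow (hα : IsEps α) (hle : e ≤ α) (hq : q < nextEps e) (hb : b < nextEps e) :
    subst e α (q * ω ^ b) = subst e α q * ω ^ subst e α b := by
  rcases eq_or_ne q 0 with rfl | hq0
  · simp
  rcases eq_or_ne b 0 with rfl | hb0
  · simp
  rw [mul_omega0_opow hq0 hb0, mul_omega0_opow (subst_ne_zero hα hle hq0 hq)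
      (subst_ne_zero hα hle hb0 hb), subst_opow hα,
    subst_add hα hle ((log_le_self _ _).trans_lt hq) hb, log_subst hα hle hq0 hq]

theorem subst_mul (hα : IsEps α) (hle : e ≤ α) (hq : q < nextEps e) (hr : r < nextEps e) :
    subst e α (q * r) = subst e α q * subst e α r := by
  induction r using opow_mul_add_induction with
  | zero => simp
  | step b d s hd0 hd hs ih =>
    have hE := isEps_nextEps e
    have hb : b < nextEps e := (self_le_opow_mul_add hd0).trans_lt hr
    have hs' : s < nextEps e := (lt_opow_mul_add_of_lt hd0 hs).trans hr
    have hqb : q * ω ^ b < nextEps e := hE.isPrincipal_mul hq (hE.opow_lt hb)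
    obtain ⟨n, rfl⟩ := lt_omega0.1 hd
    rw [mul_add, ← mul_assoc,
      subst_add hα hle (hE.isPrincipal_add.mul_natCast_lt hqb n) (hE.isPrincipal_mul hq hs'),
      subst_mul_natCast hα hle hqb, ih hs', subst_mul_opow hα hle hq hb,
      subst_opow_mul_add hα hd hs, mul_add, mul_assoc]

end SubstEps

/-- For epsilon numbers e ≤ α, the map q ↦ q[e := α] is an order isomorphism
from [e, e⁺) onto [α, α⁺) ∩ M(α, e), commuting with +, ·, and ω^·,
with inverse q ↦ q[α := e]. -/
theorem subst_orderIso (e α : Ordinal.{0}) (he : IsEps e) (hα : IsEps α) (hle : e ≤ α) :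
    (∀ q ∈ Set.Ico e (nextEps e),
        subst e α q ∈ Set.Ico α (nextEps α) ∩ MSet α e) ∧
    (∀ q ∈ Set.Ico e (nextEps e), ∀ r ∈ Set.Ico e (nextEps e),
        (q < r ↔ subst e α q < subst e α r) ∧
        subst e α (q + r) = subst e α q + subst e α r ∧
        subst e α (q * r) = subst e α q * subst e α r) ∧
    (∀ q ∈ Set.Ico e (nextEps e),
        subst e α (omega0 ^ q) = omega0 ^ subst e α q) ∧
    (∀ q ∈ Set.Ico e (nextEps e), subst α e (subst e α q) = q) ∧
    (∀ r ∈ Set.Ico α (nextEps α) ∩ MSet α e,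
        subst e α (subst α e r) = r ∧ subst α e r ∈ Set.Ico e (nextEps e)) := by
  refine ⟨fun q ⟨hge, hq⟩ => ?_, fun q ⟨_, hq⟩ r ⟨_, hr⟩ => ?_,
    fun q _ => subst_opow hα q, fun q ⟨_, hq⟩ => subst_subst he hα hle hq, ?_⟩
  · have hlt := subst_lt_nextEps hα hle hq
    exact ⟨⟨le_subst he hα hle hge hq, hlt⟩, hlt, Ep_subst_inter_Iio_subset hα hle hq⟩
  · exact ⟨((subst_strictMonoOn hα hle).lt_iff_lt hq hr).symm, subst_add hα hle hq hr,
      subst_mul hα hle hq hr⟩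
  · rintro r ⟨⟨hαr, -⟩, hr, hEp⟩
    obtain ⟨y, hy, rfl⟩ := exists_subst_eq he hα hle hr hEp
    rw [subst_subst he hα hle hy]
    refine ⟨rfl, le_of_not_gt fun hye => ?_, hy⟩
    rw [subst_of_lt hα hye] at hαr
    exact (hye.trans_le hle).not_ge hαr
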